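/- Fix i ∈ {0,…,n}. (1) For every p ≥ 1 and every smooth p-form ω on |Δ^n|, d(h^i ω) + h^i(dω) = −ω as forms on |Δ^n| (equality at every point of |Δ^n| on p-tuples of tangent vectors from V). (2) For every smooth function f on a neighborhood of |Δ^n| and every t ∈ |Δ^n|, h^i(df)(t) = f(e_i) − f(t). (Together: d h^i + h^i d = ε^i − 1, where ε^i is evaluation of the degree-0 component at the vertex e_i.) -/

import Mathlib

open MeasureTheory
open scoped BigOperators

noncomputable section

/-- ℝ^{n+1} -/
abbrev Vec (n : ℕ) := Fin (n + 1) → ℝ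

/-- standard basis vector e_i -/
def eVec (n : ℕ) (i : Fin (n + 1)) : Vec n := Pi.single i 1

/-- Raw (not necessarily alternating) inhomogeneous forms: a family of
degree-`p` "forms" given as functions of a point and a `p`-tuple of vectors. -/
def MForm (n : ℕ) := (p : ℕ) → Vec n → (Fin p → Vec n) → ℝ

/-- Embed a raw `p`-form as an inhomogeneous form concentrated in degree `p`. -/
def ofDeg (n p : ℕ) (ω : Vec n → (Fin p → Vec n) → ℝ) : MForm n :=
  fun q t v => if h : q = p then ω t (fun i => v (Fin.cast h.symm i)) else 0

/-- Exterior derivative. -/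
def exd (n : ℕ) (F : MForm n) : MForm n :=
  fun q => match q with
  | 0 => fun _ _ => 0
  | (p + 1) => fun t v =>
      ∑ j : Fin (p + 1), (-1 : ℝ) ^ (j : ℕ) *
        fderiv ℝ (fun x => F p x (fun i => v (Fin.succAbove j i))) t (v j)

/-- The Dupont operator `h^i`. -/
def hOp (n : ℕ) (i : Fin (n + 1)) (F : MForm n) : MForm n :=
  fun p t v =>
    ∫ s in (0:ℝ)..1, (1 - s) ^ p *
      F (p + 1) ((1 - s) • t + s • eVec n i) (Fin.cons (eVec n i - t) v)

/-- Iterated Dupont operators `h^{i_k} ∘ ⋯ ∘ h^{i_0}`. -/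
def hTuple (n : ℕ) {m : ℕ} (c : Fin m → Fin (n + 1)) (F : MForm n) : MForm n :=
  (List.ofFn c).foldl (fun G i => hOp n i G) F

/-- The Whitney form ω_{c 0, …, c p}. -/
def whitney (n p : ℕ) (c : Fin (p + 1) → Fin (n + 1)) :
    Vec n → (Fin p → Vec n) → ℝ :=
  fun t v => ∑ l : Fin (p + 1), (-1 : ℝ) ^ (l : ℕ) * t (c l) *
    Matrix.det (Matrix.of fun a b : Fin p => v a (c (Fin.succAbove l b)))

/-- ω̄ = p! ω. -/
def whitneyBar (n p : ℕ) (c : Fin (p + 1) → Fin (n + 1)) :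
    Vec n → (Fin p → Vec n) → ℝ :=
  fun t v => (Nat.factorial p : ℝ) * whitney n p c t v

/-- Wedge of a homogeneous `k`-form with an inhomogeneous form. -/
def wedgeHom (n k : ℕ) (α : Vec n → (Fin k → Vec n) → ℝ) (G : MForm n) : MForm n :=
  fun q t v =>
    if h : k ≤ q then
      ((Nat.factorial k : ℝ) * (Nat.factorial (q - k) : ℝ))⁻¹ *
        ∑ σ : Equiv.Perm (Fin q), ((Equiv.Perm.sign σ : ℤ) : ℝ) *
          α t (fun i => v (σ (Fin.castLE h i))) *
          G (q - k) t (fun j => v (σ (Fin.cast (Nat.add_sub_cancel' h) (Fin.natAdd k j))))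
    else 0

open scoped Classical in
/-- The Dupont homotopy. -/
def sDup (n : ℕ) (F : MForm n) : MForm n :=
  fun q t v => - ∑ k ∈ Finset.range n,
    ∑ c ∈ Finset.univ.filter (fun c : Fin (k + 1) → Fin (n + 1) => StrictMono c),
      wedgeHom n k (whitneyBar n k c) (hTuple n c F) q t v

/-- The unit cube [0,1]^p. -/
def cubeSet (p : ℕ) : Set (Fin p → ℝ) := Set.univ.pi fun _ => Set.Icc (0:ℝ) 1

/-- Canonical parametrization of the simplex with vertices `verts`. -/
def GmapV (n p : ℕ) (verts : Fin (p + 1) → Vec n) : (Fin p → ℝ) → Vec n :=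
  fun s => ∑ l : Fin (p + 1),
    ((∏ b ∈ Finset.univ.filter (fun b : Fin p => (b : ℕ) < (l : ℕ)), s b) *
      (if h : (l : ℕ) < p then 1 - s ⟨l, h⟩ else 1)) • verts l

/-- Integral of a raw `p`-form over the simplex with vertices `verts`. -/
def simplexIntV (n p : ℕ) (verts : Fin (p + 1) → Vec n)
    (ω : Vec n → (Fin p → Vec n) → ℝ) : ℝ :=
  ∫ s in cubeSet p, ω (GmapV n p verts s)
      (fun a => fderiv ℝ (GmapV n p verts) s (Pi.single a 1))

/-- ∫_{[c 0, …, c p]} ω. -/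
def simplexInt (n p : ℕ) (c : Fin (p + 1) → Fin (n + 1))
    (ω : Vec n → (Fin p → Vec n) → ℝ) : ℝ :=
  simplexIntV n p (fun l => eVec n (c l)) ω

open scoped Classical in
/-- (WR)(ω) for a homogeneous raw p-form ω. -/
def WRhom (n p : ℕ) (ω : Vec n → (Fin p → Vec n) → ℝ) :
    Vec n → (Fin p → Vec n) → ℝ :=
  fun t v =>
    ∑ c ∈ Finset.univ.filter (fun c : Fin (p + 1) → Fin (n + 1) => StrictMono c),
      simplexInt n p c ω * whitneyBar n p c t v

/-!
Along the segment `γ s = (1 - s) • x + s • e` from `x` to the vertex `e`, the integrands of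
`d (h ω)` and `h (d ω)` add up to the `s`-derivative of `(1 - s) ^ p * ω (γ s) v`: the terms
differentiating `ω` in a direction `v j` cancel in pairs, and since `ω` is alternating, moving
`v j` back into its slot turns each of the `p` remaining terms into
`-(1 - s) ^ (p - 1) * ω (γ s) v`.
Integrating over `[0, 1]` leaves the value at `s = 0` with a minus sign, `-ω x v`. For a function
`f`, `h (d f)` is the integral of the derivative of `f` along the segment, `f e - f x`.
Differentiating `h ω` under the integral sign only needs the integrand to be jointly `C¹` in `s`
and `x`.
-/

theorem Fin.removeNth_succ_cons {α : Type*} {p : ℕ} (j : Fin (p + 1)) (a : α)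
    (v : Fin (p + 1) → α) :
    j.succ.removeNth (Fin.cons a v : Fin (p + 2) → α) = Fin.cons a (j.removeNth v) := by
  funext k
  cases k using Fin.cases <;>
    simp [Fin.removeNth_apply, Fin.succ_succAbove_succ]

theorem AlternatingMap.map_cons_removeNth {R M N : Type*} [CommRing R] [AddCommGroup M]
    [Module R M] [AddCommGroup N] [Module R N] {q : ℕ} (f : M [⋀^Fin (q + 1)]→ₗ[R] N)
    (v : Fin (q + 1) → M) (j : Fin (q + 1)) :
    f (Fin.cons (v j) (j.removeNth v)) = (-1 : ℤ) ^ (j : ℕ) • f v := by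
  refine (f.neg_one_pow_smul_map_insertNth j (v j) (j.removeNth v)).symm.trans ?_
  rw [Fin.insertNth_self_removeNth]

section Parametric

variable {E F : Type*} [NormedAddCommGroup E] [NormedSpace ℝ E] [NormedAddCommGroup F]
  [NormedSpace ℝ F]

theorem continuous_fderiv_of_contDiff_uncurry {G : ℝ → E → F}
    (hG : ContDiff ℝ 1 (Function.uncurry G)) : Continuous fun p : ℝ × E => fderiv ℝ (G p.1) p.2 :=
  (ContDiff.fderiv (f := fun p : ℝ × E => G p.1) (n := 0)
    (hG.comp (contDiff_fst.fst.prodMk contDiff_snd)) contDiff_snd (by norm_num)).continuous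

theorem hasFDerivAt_intervalIntegral_of_contDiff {G : ℝ → E → F}
    (hG : ContDiff ℝ 1 (Function.uncurry G)) (a b : ℝ) (x₀ : E) :
    HasFDerivAt (fun x => ∫ s in a..b, G s x) (∫ s in a..b, fderiv ℝ (G s) x₀) x₀ := by
  have hG' := continuous_fderiv_of_contDiff_uncurry hG
  have hG'₀ : Continuous fun s => fderiv ℝ (G s) x₀ :=
    hG'.comp (continuous_id.prodMk continuous_const)
  have hbound : ∀ᶠ x in nhds x₀, ∀ s ∈ Set.uIcc a b,
      ‖fderiv ℝ (G s) x‖ < ‖fderiv ℝ (G s) x₀‖ + 1 := by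
    refine isCompact_uIcc.eventually_forall_of_forall_eventually fun s _ => ?_
    have hgap : ContinuousAt
        (fun z : E × ℝ => ‖fderiv ℝ (G z.2) z.1‖ - ‖fderiv ℝ (G z.2) x₀‖) (x₀, s) :=
      ((hG'.comp continuous_swap).norm.sub (hG'₀.comp continuous_snd).norm).continuousAt
    filter_upwards [hgap.eventually (gt_mem_nhds (by simp : _ < (1 : ℝ)))] with z hz
    linarith
  have hcont : ∀ x, Continuous fun s => G s x := fun x =>
    hG.continuous.comp (continuous_id.prodMk continuous_const)
  refine intervalIntegral.hasFDerivAt_integral_of_dominated_of_fderiv_le hbound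
    (.of_forall fun x => (hcont x).aestronglyMeasurable) ((hcont x₀).intervalIntegrable a b)
    hG'₀.aestronglyMeasurable
    (ae_of_all _ fun s hs x hx => (hx s (Set.uIoc_subset_uIcc hs)).le)
    ((hG'₀.norm.add continuous_const).intervalIntegrable a b)
    (ae_of_all _ fun s _ x _ => ?_)
  exact ((hG.comp (contDiff_const.prodMk contDiff_id)).differentiable one_ne_zero x).hasFDerivAt

end Parametric

section Cone

variable {E : Type*} [NormedAddCommGroup E] [NormedSpace ℝ E] {q : ℕ}

def rawExtDeriv {p : ℕ} (ω : E → (Fin p → E) → ℝ) : E → (Fin (p + 1) → E) → ℝ :=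
  fun x v => ∑ j : Fin (p + 1),
    (-1 : ℝ) ^ (j : ℕ) * fderiv ℝ (fun y => ω y (j.removeNth v)) x (v j)

-- The operator `h^i` of the statement, with the vertex `e_i` replaced by an arbitrary point `e`.
def coneOp (e : E) {p : ℕ} (ω : E → (Fin (p + 1) → E) → ℝ) : E → (Fin p → E) → ℝ :=
  fun x w => ∫ s in (0 : ℝ)..1, (1 - s) ^ p * ω ((1 - s) • x + s • e) (Fin.cons (e - x) w)

theorem rawExtDeriv_cons {p : ℕ} (ω : E → (Fin (p + 1) → E) → ℝ) (x a : E)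
    (v : Fin (p + 1) → E) :
    rawExtDeriv ω x (Fin.cons a v) = fderiv ℝ (fun y => ω y v) x a
      - ∑ j : Fin (p + 1), (-1 : ℝ) ^ (j : ℕ) *
          fderiv ℝ (fun y => ω y (Fin.cons a (j.removeNth v))) x (v j) := by
  rw [rawExtDeriv, Fin.sum_univ_succ, sub_eq_add_neg, ← Finset.sum_neg_distrib]
  simp only [Fin.removeNth_zero, Fin.tail_cons, Fin.cons_zero, Fin.val_zero, pow_zero, one_mul,
    Fin.cons_succ, Fin.val_succ, pow_succ, Fin.removeNth_succ_cons, mul_neg_one, neg_mul]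

theorem hasDerivAt_conePath (e x : E) (s : ℝ) :
    HasDerivAt (fun s : ℝ => (1 - s) • x + s • e) (e - x) s := by
  refine ((((hasDerivAt_id s).const_sub 1).smul_const x).fun_add
    ((hasDerivAt_id s).smul_const e)).congr_deriv ?_
  simp only [neg_smul, one_smul]
  abel

theorem hasDerivAt_pow_mul_conePath {f : E → ℝ} (hf : Differentiable ℝ f) (e x : E) (s : ℝ) :
    HasDerivAt (fun s => (1 - s) ^ (q + 1) * f ((1 - s) • x + s • e))
      ((1 - s) ^ (q + 1) * fderiv ℝ f ((1 - s) • x + s • e) (e - x)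
        - (q + 1) * (1 - s) ^ q * f ((1 - s) • x + s • e)) s := by
  have h1 : HasDerivAt (fun s : ℝ => (1 - s) ^ (q + 1)) (-((q + 1) * (1 - s) ^ q)) s := by
    refine (((hasDerivAt_id s).const_sub 1).fun_pow (q + 1)).congr_deriv ?_
    simp only [id_eq, Nat.add_sub_cancel]
    push_cast
    ring
  have h2 := (hf _).hasFDerivAt.comp_hasDerivAt s (hasDerivAt_conePath e x s)
  exact (h1.mul h2).congr_deriv (by simp only [Function.comp_apply]; ring)

theorem coneOp_rawExtDeriv_eq_sub {f : E → ℝ} (hf : ContDiff ℝ 1 f) (e x : E) (w : Fin 0 → E) :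
    coneOp e (rawExtDeriv fun y (_ : Fin 0 → E) => f y) x w = f e - f x := by
  have hd : ∀ s, HasDerivAt (fun s : ℝ => f ((1 - s) • x + s • e))
      (fderiv ℝ f ((1 - s) • x + s • e) (e - x)) s := fun s =>
    (hf.differentiable one_ne_zero _).hasFDerivAt.comp_hasDerivAt s (hasDerivAt_conePath e x s)
  simp only [coneOp, rawExtDeriv, Fin.sum_univ_succ, Fin.sum_univ_zero, Fin.val_zero, pow_zero,
    one_mul, add_zero, Fin.cons_zero]
  rw [intervalIntegral.integral_eq_sub_of_hasDerivAt (fun s _ => hd s)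
    (Continuous.intervalIntegrable (by fun_prop) 0 1)]
  simp

variable [FiniteDimensional ℝ E]

def consCLM (f : E [⋀^Fin (q + 1)]→ₗ[ℝ] ℝ) (w : Fin q → E) : E →L[ℝ] ℝ :=
  LinearMap.toContinuousLinearMap (f.toMultilinearMap.toLinearMap (Fin.cons 0 w) 0)

@[simp]
theorem consCLM_apply (f : E [⋀^Fin (q + 1)]→ₗ[ℝ] ℝ) (w : Fin q → E) (a : E) :
    consCLM f w a = f (Fin.cons a w) := by
  simp [consCLM, Fin.update_cons_zero]

variable {ω : E → E [⋀^Fin (q + 1)]→ₗ[ℝ] ℝ} {k : WithTop ℕ∞}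

-- In finite dimension, smoothness of each `x ↦ ω x v` makes `x ↦ ω x (Fin.cons · w)` smooth as a
-- map into the dual; this is the joint smoothness in the point and the first vector that the
-- integrand of `coneOp` needs.
theorem contDiff_consCLM (hω : ∀ v, ContDiff ℝ k fun x => ω x v) (w : Fin q → E) :
    ContDiff ℝ k fun x => consCLM (ω x) w :=
  contDiff_clm_apply_iff.mpr fun a => by simpa using hω (Fin.cons a w)

theorem contDiff_cone_integrand (hω : ∀ v, ContDiff ℝ k fun x => ω x v) (e : E) (w : Fin q → E) :
    ContDiff ℝ k fun p : ℝ × E => ω ((1 - p.1) • p.2 + p.1 • e) (Fin.cons (e - p.2) w) := by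
  simpa using ((contDiff_consCLM hω w).comp (by fun_prop : ContDiff ℝ k
    fun p : ℝ × E => (1 - p.1) • p.2 + p.1 • e)).clm_apply (by fun_prop : ContDiff ℝ k
    fun p : ℝ × E => e - p.2)

theorem fderiv_cone_integrand_apply (hω : ∀ v, ContDiff ℝ 1 fun x => ω x v) (e : E)
    (w : Fin q → E) (s : ℝ) (x d : E) :
    fderiv ℝ (fun x => ω ((1 - s) • x + s • e) (Fin.cons (e - x) w)) x d
      = (1 - s) * fderiv ℝ (fun y => ω y (Fin.cons (e - x) w)) ((1 - s) • x + s • e) d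
        - ω ((1 - s) • x + s • e) (Fin.cons d w) := by
  have hA := (contDiff_consCLM hω w).differentiable one_ne_zero ((1 - s) • x + s • e)
  have hpath : HasFDerivAt (fun x : E => (1 - s) • x + s • e)
      ((1 - s) • ContinuousLinearMap.id ℝ E) x :=
    ((hasFDerivAt_id x).const_smul (1 - s)).add_const (s • e)
  have h : HasFDerivAt (fun x => consCLM (ω ((1 - s) • x + s • e)) w (e - x)) _ x :=
    (hA.hasFDerivAt.comp x hpath).clm_apply ((hasFDerivAt_const e x).sub (hasFDerivAt_id x))
  simp only [← consCLM_apply]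
  rw [h.fderiv, fderiv_clm_apply hA (differentiableAt_const _)]
  simp only [zero_sub, ContinuousLinearMap.comp_neg, ContinuousLinearMap.comp_id,
    ContinuousLinearMap.comp_smulₛₗ, Real.ringHom_apply, ContinuousLinearMap.flip_smul, smul_apply,
    map_sub, add_apply, neg_apply, consCLM_apply, sub_apply, ContinuousLinearMap.flip_apply,
    smul_eq_mul, fderiv_fun_const, Pi.zero_apply, ContinuousLinearMap.comp_zero, zero_add]
  ring

theorem fderiv_coneOp_apply (hω : ∀ v, ContDiff ℝ 1 fun x => ω x v) (e x : E) (w : Fin q → E)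
    (d : E) :
    fderiv ℝ (fun y => coneOp e (fun y u => ω y u) y w) x d
      = ∫ s in (0 : ℝ)..1, (1 - s) ^ q *
          ((1 - s) * fderiv ℝ (fun y => ω y (Fin.cons (e - x) w)) ((1 - s) • x + s • e) d
            - ω ((1 - s) • x + s • e) (Fin.cons d w)) := by
  have hG : ContDiff ℝ 1 (Function.uncurry fun (s : ℝ) (x : E) =>
      (1 - s) ^ q * ω ((1 - s) • x + s • e) (Fin.cons (e - x) w)) :=
    (by fun_prop : ContDiff ℝ 1 fun p : ℝ × E => (1 - p.1) ^ q).mul (contDiff_cone_integrand hω e w)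
  have hG' : Continuous fun s : ℝ => fderiv ℝ (fun x => (1 - s) ^ q *
      ω ((1 - s) • x + s • e) (Fin.cons (e - x) w)) x :=
    (continuous_fderiv_of_contDiff_uncurry hG).comp (continuous_id.prodMk continuous_const)
  unfold coneOp
  rw [(hasFDerivAt_intervalIntegral_of_contDiff hG 0 1 x).fderiv,
    ContinuousLinearMap.intervalIntegral_apply (hG'.intervalIntegrable 0 1)]
  refine intervalIntegral.integral_congr fun s _ => ?_
  have hdiff : DifferentiableAt ℝ (fun x => ω ((1 - s) • x + s • e) (Fin.cons (e - x) w)) x :=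
    ((contDiff_cone_integrand hω e w).comp (contDiff_const.prodMk contDiff_id)).differentiable
      one_ne_zero x
  simp only [fderiv_const_mul hdiff, FunLike.coe_smul, Pi.smul_apply, smul_eq_mul,
    fderiv_cone_integrand_apply hω]

theorem rawExtDeriv_coneOp_apply (hω : ∀ v, ContDiff ℝ 1 fun x => ω x v) (e x : E)
    (v : Fin (q + 1) → E) :
    rawExtDeriv (coneOp e fun y u => ω y u) x v = ∫ s in (0 : ℝ)..1,
      ((1 - s) ^ (q + 1) * ∑ j : Fin (q + 1), (-1) ^ (j : ℕ) *
          fderiv ℝ (fun y => ω y (Fin.cons (e - x) (j.removeNth v))) ((1 - s) • x + s • e) (v j)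
        - (q + 1) * (1 - s) ^ q * ω ((1 - s) • x + s • e) v) := by
  simp only [rawExtDeriv, fderiv_coneOp_apply hω, ← intervalIntegral.integral_const_mul]
  refine (intervalIntegral.integral_finsetSum fun j _ => ?_).symm.trans
    (intervalIntegral.integral_congr fun s _ => ?_)
  · exact Continuous.intervalIntegrable (by fun_prop) 0 1
  have hterm : ∀ (j : ℕ) (F W : ℝ),
      (-1 : ℝ) ^ j * ((1 - s) ^ q * ((1 - s) * F - (-1 : ℤ) ^ j • W))
        = (1 - s) ^ (q + 1) * ((-1) ^ j * F) - (1 - s) ^ q * W := fun j F W => by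
    rw [zsmul_eq_mul]
    push_cast
    have hsign : (-1 : ℝ) ^ j * (-1) ^ j = 1 := by rw [← pow_add, Even.neg_one_pow ⟨j, rfl⟩]
    linear_combination (-(1 - s) ^ q * W) * hsign
  simp only [AlternatingMap.map_cons_removeNth, hterm, Finset.sum_sub_distrib,
    ← Finset.mul_sum, Finset.sum_const, Finset.card_univ, Fintype.card_fin, nsmul_eq_mul]
  push_cast
  ring

theorem rawExtDeriv_coneOp_add_coneOp_rawExtDeriv (hω : ∀ v, ContDiff ℝ 1 fun x => ω x v)
    (e x : E) (v : Fin (q + 1) → E) :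
    rawExtDeriv (coneOp e fun y u => ω y u) x v + coneOp e (rawExtDeriv fun y u => ω y u) x v
      = -ω x v := by
  simp only [rawExtDeriv_coneOp_apply hω, coneOp, rawExtDeriv_cons]
  rw [← intervalIntegral.integral_add (Continuous.intervalIntegrable (by fun_prop) 0 1)
    (Continuous.intervalIntegrable (by fun_prop) 0 1)]
  calc _ = ∫ s in (0 : ℝ)..1,
      ((1 - s) ^ (q + 1) * fderiv ℝ (fun y => ω y v) ((1 - s) • x + s • e) (e - x)
        - (q + 1) * (1 - s) ^ q * ω ((1 - s) • x + s • e) v) :=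
        intervalIntegral.integral_congr fun s _ => by ring
    _ = -ω x v := by
      rw [intervalIntegral.integral_eq_sub_of_hasDerivAt
        (fun s _ => hasDerivAt_pow_mul_conePath ((hω v).differentiable one_ne_zero) e x s)
        (Continuous.intervalIntegrable (by fun_prop) 0 1)]
      simp

end Cone

theorem ofDeg_self (n p : ℕ) (ω : Vec n → (Fin p → Vec n) → ℝ) : ofDeg n p ω p = ω := by
  funext t v
  simp [ofDeg]

theorem exd_succ (n : ℕ) (F : MForm n) (p : ℕ) : exd n F (p + 1) = rawExtDeriv (F p) := rfl

theorem hOp_eq_coneOp (n : ℕ) (i : Fin (n + 1)) (F : MForm n) (p : ℕ) :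
    hOp n i F p = coneOp (eVec n i) (F (p + 1)) := rfl

/-- `d h^i + h^i d = ε^i - 1`. -/
theorem dupont_operator_homotopy (n : ℕ) (i : Fin (n + 1)) :
    -- (1) on p-forms with p ≥ 1 : d(h^i ω) + h^i(dω) = -ω
    (∀ q : ℕ, ∀ ω : Vec n → AlternatingMap ℝ (Vec n) ℝ (Fin (q + 1)),
      (∀ v : Fin (q + 1) → Vec n, ContDiff ℝ (⊤ : ℕ∞) (fun t => ω t v)) →
      ∀ t ∈ stdSimplex ℝ (Fin (n + 1)), ∀ v : Fin (q + 1) → Vec n,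
        (∀ a, ∑ j, v a j = 0) →
        exd n (hOp n i (ofDeg n (q + 1) (fun x u => ω x u))) (q + 1) t v
          + hOp n i (exd n (ofDeg n (q + 1) (fun x u => ω x u))) (q + 1) t v
        = - ω t v)
    ∧
    -- (2) on functions : h^i(df)(t) = f(e_i) - f(t)
    (∀ f : Vec n → ℝ, ContDiff ℝ (⊤ : ℕ∞) f →
      ∀ t ∈ stdSimplex ℝ (Fin (n + 1)),
        hOp n i (exd n (ofDeg n 0 (fun x _ => f x))) 0 t (fun j => j.elim0)
          = f (eVec n i) - f t) := by
  have hle : (1 : WithTop ℕ∞) ≤ (⊤ : ℕ∞) := by exact_mod_cast le_top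
  refine ⟨fun q ω hω t _ v _ => ?_, fun f hf t _ => ?_⟩
  · simp only [exd_succ, hOp_eq_coneOp, ofDeg_self]
    exact rawExtDeriv_coneOp_add_coneOp_rawExtDeriv (fun v => (hω v).of_le hle) _ t v
  · simp only [exd_succ, hOp_eq_coneOp, ofDeg_self]
    exact coneOp_rawExtDeriv_eq_sub (hf.of_le hle) _ t _
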